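/- arXiv:1304.3622 — 2 statements merged into one kernel-verified Lean document; each statement's English description precedes it below -/
import Mathlib

section
/- Let D be a cofibrantly generated model category with set of generating cofibrations I, and let C be a full coreflective subcategory of D such that the unit η : X → GX of the coreflection is a natural isomorphism and every map in I is a morphism between objects of C. Then a morphism f : X → Y between objects of C is an I-cofibration in C (i.e., has the left lifting property with respect to all maps between objects of C that are I-injective) if and only if f is an I-cofibration in D (i.e., has the left lifting property with respect to all I-injective maps in D). The analogous statement holds with the set J of generating trivial cofibrations in place of I. -/
open CategoryTheory CategoryTheory.Limits

universe w v u

namespace Paper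

variable {D : Type u} [Category.{v} D]

/-- `f` is a retract of `g` (in the arrow category). -/
def IsRetract {X Y X' Y' : D} (f : X ⟶ Y) (g : X' ⟶ Y') : Prop :=
  ∃ (i : Arrow.mk f ⟶ Arrow.mk g) (r : Arrow.mk g ⟶ Arrow.mk f), i ≫ r = 𝟙 _

/-- The class of maps with the left lifting property with respect to `T`. -/
def llp (T : MorphismProperty D) : MorphismProperty D :=
  fun _ _ f => ∀ ⦃X Y : D⦄ (p : X ⟶ Y), T p → HasLiftingProperty f p

/-- The class of `T`-injective maps, i.e. maps with the right lifting property
with respect to `T`. -/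
def rlp (T : MorphismProperty D) : MorphismProperty D :=
  fun _ _ p => ∀ ⦃A B : D⦄ (f : A ⟶ B), T f → HasLiftingProperty f p

/-- `g` is a pushout of some map of `I`. -/
def pushouts (I : MorphismProperty D) : MorphismProperty D :=
  fun X Y g => ∃ (A B : D) (f : A ⟶ B) (u : A ⟶ X) (v : B ⟶ Y),
    I f ∧ IsPushout u f g v

section Sequences

variable {J : Type w} [Preorder J]

/-- The restriction of `F : J ⥤ D` to `{j | j < i}`. -/
def restrictLT (F : J ⥤ D) (i : J) : Set.Iio i ⥤ D :=
  (Subtype.mono_coe _).functor ⋙ F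

/-- The cocone over the restriction of `F` to `{j | j < i}` whose point is `F.obj i`. -/
def coconeLT (F : J ⥤ D) (i : J) : Cocone (restrictLT F i) where
  pt := F.obj i
  ι :=
    { app := fun k => F.map (homOfLE k.2.le)
      naturality := fun k l φ => by
        dsimp [restrictLT]
        exact (F.map_comp _ _).symm.trans
          ((congrArg F.map (Subsingleton.elim _ _)).trans (Category.comp_id _).symm) }

/-- A functor `F` indexed by a well-ordered set is a sequence of maps of `K`:
each successor step belongs to `K`, and `F` is continuous at limit elements. -/
structure IsSequenceIn (K : MorphismProperty D) [SuccOrder J] (F : J ⥤ D) : Prop where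
  succ_mem : ∀ i : J, ¬ IsMax i → K (F.map (homOfLE (Order.le_succ i)))
  smooth : ∀ i : J, Order.IsSuccLimit i → Nonempty (IsColimit (coconeLT F i))

end Sequences

/-- The data exhibiting `f` as a transfinite composition of maps of `K`:
a sequence of maps of `K` indexed by a well-ordered set, starting at the domain of `f`,
whose colimit is the codomain of `f`. -/
structure TransfiniteCompositionData (K : MorphismProperty D) {X Y : D} (f : X ⟶ Y) where
  J : Type v
  [instLinearOrder : LinearOrder J]
  [instOrderBot : OrderBot J]
  [instSuccOrder : SuccOrder J]
  [instWellFoundedLT : WellFoundedLT J]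
  F : J ⥤ D
  seq : IsSequenceIn K F
  isoBot : F.obj ⊥ ≅ X
  c : Cocone F
  isColimit : IsColimit c
  isoTop : c.pt ≅ Y
  fac : f = isoBot.inv ≫ c.ι.app ⊥ ≫ isoTop.hom

/-- The class of transfinite compositions of pushouts of maps of `I`; this is the class
of relative `I`-cell complexes (`I`-cell). -/
def cell (I : MorphismProperty D) : MorphismProperty D :=
  fun _ _ f => Nonempty (TransfiniteCompositionData (pushouts I) f)

/-- The canonical map `colim Hom(A, F -) ⟶ Hom(A, c.pt)` is bijective: every map
`A ⟶ c.pt` factors through some stage, and two maps to a stage which become equal in the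
colimit are identified at some later stage. -/
def HomColimCommutes (A : D) {J : Type w} [Preorder J] (F : J ⥤ D) (c : Cocone F) : Prop :=
  (∀ g : A ⟶ c.pt, ∃ (j : J) (h : A ⟶ F.obj j), h ≫ c.ι.app j = g) ∧
  (∀ (j : J) (h₁ h₂ : A ⟶ F.obj j), h₁ ≫ c.ι.app j = h₂ ≫ c.ι.app j →
     ∃ (j' : J) (k : j ⟶ j'), h₁ ≫ F.map k = h₂ ≫ F.map k)

/-- `A` is `κ`-small relative to `K` (Hovey 2.1.3): for every `κ`-filtered well-ordered
set `J` and every `J`-indexed sequence of maps of `K`, the functor `Hom(A, -)` commutes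
with the colimit of the sequence. -/
def IsSmallRelTo (A : D) (K : MorphismProperty D) (κ : Cardinal.{v}) : Prop :=
  ∀ (J : Type v) [LinearOrder J] [OrderBot J] [SuccOrder J] [WellFoundedLT J] [NoMaxOrder J],
    (∀ s : Set J, Cardinal.mk s ≤ κ → BddAbove s) →
    ∀ (F : J ⥤ D), IsSequenceIn K F →
      ∀ (c : Cocone F), IsColimit c → HomColimCommutes A F c

/-- `A` is small relative to `K` if it is `κ`-small relative to `K`
for some regular cardinal `κ`. -/
def IsSmallRel (A : D) (K : MorphismProperty D) : Prop :=
  ∃ κ : Cardinal.{v}, κ.IsRegular ∧ IsSmallRelTo A K κ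

/-- `A` is finite relative to `K` (Hovey 2.1.4): `Hom(A, -)` commutes with colimits of
arbitrary `K`-sequences indexed by limit-type well-ordered sets. -/
def IsFiniteRel (A : D) (K : MorphismProperty D) : Prop :=
  ∀ (J : Type v) [LinearOrder J] [OrderBot J] [SuccOrder J] [WellFoundedLT J] [NoMaxOrder J],
    ∀ (F : J ⥤ D), IsSequenceIn K F →
      ∀ (c : Cocone F), IsColimit c → HomColimCommutes A F c

/-- A model structure on a category `D` (Hovey 1.1.3, without the functoriality
of the factorizations): classes of weak equivalences, fibrations and cofibrations
satisfying the two-out-of-three, retract, lifting and factorization axioms. -/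
structure ModelStructure (D : Type u) [Category.{v} D] where
  W : MorphismProperty D
  Fib : MorphismProperty D
  Cof : MorphismProperty D
  w_comp : ∀ {X Y Z : D} (f : X ⟶ Y) (g : Y ⟶ Z), W f → W g → W (f ≫ g)
  w_cancel_left : ∀ {X Y Z : D} (f : X ⟶ Y) (g : Y ⟶ Z), W f → W (f ≫ g) → W g
  w_cancel_right : ∀ {X Y Z : D} (f : X ⟶ Y) (g : Y ⟶ Z), W g → W (f ≫ g) → W f
  w_retract : ∀ {X Y X' Y' : D} (f : X ⟶ Y) (g : X' ⟶ Y'), IsRetract f g → W g → W f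
  fib_retract : ∀ {X Y X' Y' : D} (f : X ⟶ Y) (g : X' ⟶ Y'), IsRetract f g → Fib g → Fib f
  cof_retract : ∀ {X Y X' Y' : D} (f : X ⟶ Y) (g : X' ⟶ Y'), IsRetract f g → Cof g → Cof f
  lift_cof_trivFib : ∀ {A B X Y : D} (i : A ⟶ B) (p : X ⟶ Y),
    Cof i → Fib p → W p → HasLiftingProperty i p
  lift_trivCof_fib : ∀ {A B X Y : D} (i : A ⟶ B) (p : X ⟶ Y),
    Cof i → W i → Fib p → HasLiftingProperty i p
  fact_cof_trivFib : ∀ {X Y : D} (f : X ⟶ Y),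
    ∃ (Z : D) (i : X ⟶ Z) (p : Z ⟶ Y), Cof i ∧ Fib p ∧ W p ∧ i ≫ p = f
  fact_trivCof_fib : ∀ {X Y : D} (f : X ⟶ Y),
    ∃ (Z : D) (i : X ⟶ Z) (p : Z ⟶ Y), Cof i ∧ W i ∧ Fib p ∧ i ≫ p = f

/-- A model structure is cofibrantly generated by sets `I` and `J` (Hovey 2.1.17) if the
domains of `I` (resp. `J`) are small relative to relative `I`-cell (resp. `J`-cell)
complexes, the fibrations are the `J`-injective maps and the trivial fibrations are the
`I`-injective maps. -/
structure CofibrantlyGenerated (M : ModelStructure D) (I J : MorphismProperty D) : Prop where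
  small_I : ∀ {A B : D} (f : A ⟶ B), I f → IsSmallRel A (cell I)
  small_J : ∀ {A B : D} (f : A ⟶ B), J f → IsSmallRel A (cell J)
  fib_eq : ∀ {X Y : D} (p : X ⟶ Y), M.Fib p ↔ rlp J p
  trivFib_eq : ∀ {X Y : D} (p : X ⟶ Y), (M.Fib p ∧ M.W p) ↔ rlp I p

/-- A cofibrantly generated model structure is finitely generated (Hovey 2.1.17) if
moreover the domains and codomains of `I` and `J` are finite relative to `I`-cell. -/
structure FinitelyGenerated (M : ModelStructure D) (I J : MorphismProperty D) extends
    CofibrantlyGenerated M I J : Prop where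
  finite_I : ∀ {A B : D} (f : A ⟶ B), I f → IsFiniteRel A (cell I) ∧ IsFiniteRel B (cell I)
  finite_J : ∀ {A B : D} (f : A ⟶ B), J f → IsFiniteRel A (cell I) ∧ IsFiniteRel B (cell I)

section Quillen

variable {C : Type u} [Category.{v} C]

/-- An adjunction `F ⊣ G` is a Quillen adjunction (Hovey 1.3.1) if the left adjoint `F`
preserves cofibrations and trivial cofibrations. -/
def IsQuillenAdjunction (MC : ModelStructure C) (MD : ModelStructure D)
    (F : C ⥤ D) (G : D ⥤ C) (_ : F ⊣ G) : Prop :=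
  (∀ {A B : C} (f : A ⟶ B), MC.Cof f → MD.Cof (F.map f)) ∧
  (∀ {A B : C} (f : A ⟶ B), MC.Cof f → MC.W f → MD.Cof (F.map f) ∧ MD.W (F.map f))

/-- An object is cofibrant if the map from the initial object to it is a cofibration. -/
def Cofibrant (M : ModelStructure D) [HasInitial D] (X : D) : Prop :=
  M.Cof (initial.to X)

/-- An object is fibrant if the map from it to the terminal object is a fibration. -/
def Fibrant (M : ModelStructure D) [HasTerminal D] (X : D) : Prop :=
  M.Fib (terminal.from X)

/-- A Quillen adjunction `F ⊣ G` is a Quillen equivalence (Hovey 1.3.12) if for every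
cofibrant `X` and fibrant `Y`, a map `F X ⟶ Y` is a weak equivalence if and only if its
adjoint `X ⟶ G Y` is one. -/
def IsQuillenEquivalence (MC : ModelStructure C) (MD : ModelStructure D)
    [HasInitial C] [HasTerminal D]
    (F : C ⥤ D) (G : D ⥤ C) (adj : F ⊣ G) : Prop :=
  IsQuillenAdjunction MC MD F G adj ∧
  ∀ (X : C) (Y : D), Cofibrant MC X → Fibrant MD Y →
    ∀ f : F.obj X ⟶ Y, (MD.W f ↔ MC.W (adj.homEquiv X Y f))

end Quillen

/-- The restriction of a class of maps of `D` to a full subcategory. -/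
def restrict (P : D → Prop) (K : MorphismProperty D) : MorphismProperty (ObjectProperty.FullSubcategory P) :=
  fun _ _ f => K ((ObjectProperty.ι P).map f)

/-!
Lifting `ι f` against `p` in `D` is, by adjunction, lifting `f` against `G p` in `C`, and the
same transposition shows that `G` carries `K`-injectives of `D` to `K`-injectives of `C`.
Conversely, since `ι` is fully faithful and every map of `K` lies in `C`, a map of `C` that is
`K`-injective in `C` is `K`-injective in `D`, and lifting against it is the same in `C` and `D`.
-/

theorem _root_.CategoryTheory.Functor.hasLiftingProperty_map_iff {C E : Type*} [Category C]
    [Category E] (F : C ⥤ E) [F.Full] [F.Faithful] {A B X Y : C} (i : A ⟶ B) (p : X ⟶ Y) :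
    HasLiftingProperty (F.map i) (F.map p) ↔ HasLiftingProperty i p := by
  refine ⟨fun _ => ⟨fun {u v} sq => ?_⟩, fun _ => ⟨fun {u v} sq => ?_⟩⟩
  · have sqF := sq.map F
    exact ⟨⟨⟨F.preimage sqF.lift, F.map_injective (by simp),
      F.map_injective (by simp)⟩⟩⟩
  · have sq' : CommSq (F.preimage u) i p (F.preimage v) :=
      ⟨F.map_injective (by simpa using sq.w)⟩
    exact ⟨⟨⟨F.map sq'.lift, by rw [← F.map_comp, sq'.fac_left, F.map_preimage],
      by rw [← F.map_comp, sq'.fac_right, F.map_preimage]⟩⟩⟩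

section

variable {C : Type*} [Category C] {F : C ⥤ D} {G : D ⥤ C} {K : MorphismProperty D}

theorem rlp_inverseImage_map_of_rlp (adj : F ⊣ G) {X Y : D} {p : X ⟶ Y} (hp : rlp K p) :
    rlp (K.inverseImage F) (G.map p) :=
  fun _ _ g hg => (adj.hasLiftingProperty_iff g p).1 (hp _ hg)

theorem llp_rlp_map_of_llp_rlp_inverseImage (adj : F ⊣ G) {A B : C} {f : A ⟶ B}
    (hf : llp (rlp (K.inverseImage F)) f) : llp (rlp K) (F.map f) :=
  fun _ _ p hp => (adj.hasLiftingProperty_iff f p).2 (hf _ (rlp_inverseImage_map_of_rlp adj hp))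

end

section

variable {P : D → Prop} {K : MorphismProperty D}

theorem rlp_map_of_rlp_restrict (hK : ∀ {A B : D} (g : A ⟶ B), K g → P A ∧ P B)
    {X Y : ObjectProperty.FullSubcategory P} {p : X ⟶ Y} (hp : rlp (restrict P K) p) :
    rlp K ((ObjectProperty.ι P).map p) := by
  intro A B g hg
  obtain ⟨hA, hB⟩ := hK g hg
  exact ((ObjectProperty.ι P).hasLiftingProperty_map_iff
    (ObjectProperty.homMk (X := ⟨A, hA⟩) (Y := ⟨B, hB⟩) g) p).2 (hp _ hg)

theorem llp_rlp_restrict_of_llp_rlp_map (hK : ∀ {A B : D} (g : A ⟶ B), K g → P A ∧ P B)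
    {A B : ObjectProperty.FullSubcategory P} {f : A ⟶ B}
    (hf : llp (rlp K) ((ObjectProperty.ι P).map f)) : llp (rlp (restrict P K)) f :=
  fun _ _ p hp => ((ObjectProperty.ι P).hasLiftingProperty_map_iff f p).1
    (hf _ (rlp_map_of_rlp_restrict hK hp))

theorem llp_rlp_restrict_iff {G : D ⥤ ObjectProperty.FullSubcategory P}
    (adj : ObjectProperty.ι P ⊣ G) (hK : ∀ {A B : D} (g : A ⟶ B), K g → P A ∧ P B)
    {A B : ObjectProperty.FullSubcategory P} (f : A ⟶ B) :
    llp (rlp (restrict P K)) f ↔ llp (rlp K) ((ObjectProperty.ι P).map f) :=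
  ⟨llp_rlp_map_of_llp_rlp_inverseImage adj, llp_rlp_restrict_of_llp_rlp_map hK⟩

end

theorem cofibration_in_subcategory_iff_general
    {D : Type u} [Category.{v} D]
    (I J : MorphismProperty D)
    (P : D → Prop) (G : D ⥤ ObjectProperty.FullSubcategory P)
    (adj : ObjectProperty.ι P ⊣ G)
    (hI : ∀ {A B : D} (f : A ⟶ B), I f → P A ∧ P B)
    (hJ : ∀ {A B : D} (f : A ⟶ B), J f → P A ∧ P B)
    {A B : ObjectProperty.FullSubcategory P} (f : A ⟶ B) :
    (llp (rlp (restrict P I)) f ↔ llp (rlp I) ((ObjectProperty.ι P).map f)) ∧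
    (llp (rlp (restrict P J)) f ↔ llp (rlp J) ((ObjectProperty.ι P).map f)) :=
  ⟨llp_rlp_restrict_iff adj hI f, llp_rlp_restrict_iff adj hJ f⟩

/-- Let `D` be a cofibrantly generated model category with generating
cofibrations `I` and generating trivial cofibrations `J`, and `C` a full coreflective
subcategory with unit an isomorphism such that the maps of `I` and `J` are maps between
objects of `C`. Then a map `f` of `C` is an `I`-cofibration in `C` (has the left lifting
property with respect to all `I`-injective maps of `C`) iff it is an `I`-cofibration
in `D`; and similarly for `J`. -/
theorem cofibration_in_subcategory_iff
    {D : Type u} [Category.{v} D] [HasLimits D] [HasColimits D]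
    (M : ModelStructure D) (I J : MorphismProperty D)
    (hCG : CofibrantlyGenerated M I J)
    (P : D → Prop) (G : D ⥤ ObjectProperty.FullSubcategory P)
    (adj : ObjectProperty.ι P ⊣ G)
    (hunit : IsIso adj.unit)
    (hI : ∀ {A B : D} (f : A ⟶ B), I f → P A ∧ P B)
    (hJ : ∀ {A B : D} (f : A ⟶ B), J f → P A ∧ P B)
    {A B : ObjectProperty.FullSubcategory P} (f : A ⟶ B) :
    (llp (rlp (restrict P I)) f ↔ llp (rlp I) ((ObjectProperty.ι P).map f)) ∧
    (llp (rlp (restrict P J)) f ↔ llp (rlp J) ((ObjectProperty.ι P).map f)) :=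
  cofibration_in_subcategory_iff_general I J P G adj hI hJ f

end Paper
end

section
/- The functor ν : Top → NG, which sends a topological space X to the same underlying set equipped with the topology whose open sets are the numerically open subsets of X, is right adjoint to the inclusion functor i : NG → Top; hence NG is a coreflective subcategory of Top. -/
open CategoryTheory CategoryTheory.Limits Topology

universe w v u

/-! Old (Mathlib, December 2024) integer-indexed spheres and disks, restored with their
old meaning: `𝕊 n` is the unit sphere in ℝ^{(n+1).toNat}, `𝔻 n` the closed unit ball
in ℝ^{n.toNat}, and `sphereInclusion n : 𝕊 n ⟶ 𝔻 (n + 1)`. -/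
namespace RelativeCWComplex

noncomputable def sphere (n : ℤ) : TopCat.{u} :=
  TopCat.of <| ULift <| Metric.sphere (0 : EuclideanSpace ℝ <| Fin <| (n + 1).toNat) 1

noncomputable def disk (n : ℤ) : TopCat.{u} :=
  TopCat.of <| ULift <| Metric.closedBall (0 : EuclideanSpace ℝ <| Fin <| n.toNat) 1

def sphereInclusion (n : ℤ) : sphere.{u} n ⟶ disk.{u} (n + 1) :=
  TopCat.ofHom
    { toFun := fun ⟨p, hp⟩ ↦ ⟨p, le_of_eq hp⟩
      continuous_toFun := ⟨fun t ⟨s, ⟨r, hro, hrs⟩, hst⟩ ↦ by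
        rw [isOpen_induced_iff, ← hst, ← hrs]
        tauto⟩ }

end RelativeCWComplex

namespace Paper


/-! ### Numerically generated (Δ-generated) spaces -/

/-- A subset `U` of a topological space `X` is numerically open if for every continuous
map `P : V → X` from an open subset `V` of a Euclidean space, `P ⁻¹' U` is open. -/
def NumericallyOpen {X : Type u} [TopologicalSpace X] (U : Set X) : Prop :=
  ∀ (n : ℕ) (V : Set (EuclideanSpace ℝ (Fin n))), IsOpen V → ∀ P : C(V, X), IsOpen (⇑P ⁻¹' U)

/-- The topology on (the underlying set of) `X` whose open sets are the numerically
open subsets of `X`; this is the coreflection `ν X`. -/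
def nuTop (X : Type u) [TopologicalSpace X] : TopologicalSpace X where
  IsOpen U := NumericallyOpen U
  isOpen_univ := fun _ _ _ P => by simp
  isOpen_inter := fun U₁ U₂ h₁ h₂ n V hV P => by
    rw [Set.preimage_inter]; exact (h₁ n V hV P).inter (h₂ n V hV P)
  isOpen_sUnion := fun S hS n V hV P => by
    rw [Set.preimage_sUnion]; exact isOpen_biUnion fun U hU => hS U hU n V hV P

/-- A space is numerically generated (equivalently, Δ-generated) if every numerically
open subset is open. -/
def IsNumericallyGenerated (X : Type u) [TopologicalSpace X] : Prop :=
  ∀ U : Set X, NumericallyOpen U → IsOpen U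

lemma isOpen_nuTop_iff {X : Type u} [TopologicalSpace X] {U : Set X} :
    IsOpen[nuTop X] U ↔ NumericallyOpen U := Iff.rfl

/-- The numerically generated topology is finer than the original topology; equivalently,
the identity `ν X → X` is continuous. -/
lemma nuTop_le (X : Type u) [t : TopologicalSpace X] : nuTop X ≤ t := by
  intro U hU
  exact fun n V hV P => hU.preimage P.continuous

/-- Any probe is continuous into the numerically generated topology. -/
lemma continuous_probe_nuTop {X : Type u} [TopologicalSpace X] {n : ℕ}
    {V : Set (EuclideanSpace ℝ (Fin n))} (hV : IsOpen V) (P : C(V, X)) :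
    @Continuous _ _ _ (nuTop X) ⇑P :=
  continuous_def.mpr fun U hU => hU n V hV P

/-- The numerically generated topology is idempotent. -/
lemma isNumericallyGenerated_nuTop (X : Type u) [TopologicalSpace X] :
    @IsNumericallyGenerated X (nuTop X) := by
  intro U hU n V hV P
  exact hU n V hV (@ContinuousMap.mk _ _ _ (nuTop X) ⇑P (continuous_probe_nuTop hV P))

/-- Continuous maps are continuous for the numerically generated topologies. -/
lemma continuous_nuTop_map {X Y : Type u} [TopologicalSpace X] [TopologicalSpace Y]
    (f : C(X, Y)) : @Continuous _ _ (nuTop X) (nuTop Y) ⇑f := by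
  rw [@continuous_def _ _ (nuTop X) (nuTop Y)]
  intro U hU n V hV P
  have : ⇑P ⁻¹' (⇑f ⁻¹' U) = ⇑(f.comp P) ⁻¹' U := rfl
  rw [this]
  exact hU n V hV (f.comp P)

end Paper

namespace Paper

/-! ### The category `NG` and the coreflection `ν` -/

/-- The category of numerically generated (Δ-generated) topological spaces,
as a full subcategory of `Top`. -/
abbrev NGCat : Type (u + 1) :=
  ObjectProperty.FullSubcategory fun X : TopCat.{u} => IsNumericallyGenerated X

/-- The inclusion functor `i : NG → Top`. -/
abbrev ngInclusion : NGCat.{u} ⥤ TopCat.{u} :=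
  ObjectProperty.ι _

/-- `X` retopologized with the numerically generated topology, as an object of `NG`. -/
def nuObj (X : TopCat.{u}) : NGCat.{u} :=
  ⟨@TopCat.of X (nuTop X), isNumericallyGenerated_nuTop X⟩

/-- The coreflection functor `ν : Top → NG`. -/
def nuFunctor : TopCat.{u} ⥤ NGCat.{u} where
  obj X := nuObj X
  map {X Y} f :=
    ⟨@TopCat.ofHom X Y (nuTop X) (nuTop Y)
      (@ContinuousMap.mk _ _ (nuTop X) (nuTop Y) ⇑f (continuous_nuTop_map f.hom))⟩
  map_id := fun X => rfl
  map_comp := fun f g => rfl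

end Paper

namespace Paper

/-! ### Weak homotopy equivalences -/

open Topology.Homotopy in
/-- The map on generalized loops induced by a continuous map. -/
def GenLoop.comp {X Y : Type u} [TopologicalSpace X] [TopologicalSpace Y] {N : Type}
    {x : X} (f : C(X, Y)) (p : Ω^ N X x) : Ω^ N Y (f x) :=
  ⟨f.comp p.1, fun y hy => by
    have := p.2 y hy
    simp [this]⟩

open Topology.Homotopy in
/-- The induced map `f₊ : πₙ(X, x) → πₙ(Y, f x)` on homotopy groups. -/
def HomotopyGroup.map {X Y : Type u} [TopologicalSpace X] [TopologicalSpace Y] {N : Type}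
    {x : X} (f : C(X, Y)) :
    HomotopyGroup N X x → HomotopyGroup N Y (f x) :=
  Quotient.map (GenLoop.comp f)
    (fun p q h => h.elim fun H => ⟨H.compContinuousMap f⟩)

/-- A continuous map is a weak homotopy equivalence if it induces a bijection on path
components and isomorphisms on all homotopy groups `πₙ`, `n ≥ 1`, at all basepoints. -/
structure IsWeakHomotopyEquiv {X Y : Type u} [TopologicalSpace X] [TopologicalSpace Y]
    (f : C(X, Y)) : Prop where
  surj_pi0 : ∀ y : Y, ∃ x : X, Joined (f x) y
  inj_pi0 : ∀ x₁ x₂ : X, Joined (f x₁) (f x₂) → Joined x₁ x₂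
  bij_pi : ∀ n : ℕ, 1 ≤ n → ∀ x : X,
    Function.Bijective
      (HomotopyGroup.map f : HomotopyGroup (Fin n) X x → HomotopyGroup (Fin n) Y (f x))

/-- A morphism of `Top` is a weak homotopy equivalence. -/
def TopIsWeakHomotopyEquiv : MorphismProperty TopCat.{u} :=
  fun X Y f => IsWeakHomotopyEquiv (X := X) (Y := Y) ⟨⇑f, f.hom.continuous⟩

end Paper

namespace Paper

/-! ### The generating cofibrations and trivial cofibrations of `Top` -/

open scoped TopCat in
/-- The cylinder `Dⁿ × [0, 1]` on the `n`-disk. -/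
noncomputable def diskCyl (n : ℕ) : TopCat.{u} :=
  TopCat.of ((RelativeCWComplex.disk (n : ℤ)) × unitInterval)

open scoped TopCat in
/-- The inclusion `Dⁿ × {0} → Dⁿ × [0, 1]`. -/
noncomputable def diskCylInclusion (n : ℕ) : RelativeCWComplex.disk (n : ℤ) ⟶ diskCyl.{u} n :=
  TopCat.ofHom ⟨fun x => (x, 0), continuous_id.prodMk continuous_const⟩

open scoped TopCat in
/-- The set `I = {Sⁿ⁻¹ → Dⁿ | n ≥ 0}` of boundary inclusions, the generating
cofibrations of the standard model structure on `Top` (Hovey 2.4.19). -/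
noncomputable def topI : MorphismProperty TopCat.{u} :=
  fun X Y f => ∃ n : ℕ, ∃ hX : X = RelativeCWComplex.sphere ((n : ℤ) - 1), ∃ hY : Y = RelativeCWComplex.disk (n : ℤ),
    f = eqToHom hX ≫ RelativeCWComplex.sphereInclusion ((n : ℤ) - 1) ≫
      eqToHom (show RelativeCWComplex.disk ((n : ℤ) - 1 + 1) = Y by rw [sub_add_cancel]; exact hY.symm)

open scoped TopCat in
/-- The set `J = {Dⁿ × {0} → Dⁿ × [0,1] | n ≥ 0}` of inclusions, the generating trivial
cofibrations of the standard model structure on `Top` (Hovey 2.4.19). -/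
noncomputable def topJ : MorphismProperty TopCat.{u} :=
  fun X Y f => ∃ n : ℕ, ∃ hX : X = RelativeCWComplex.disk (n : ℤ), ∃ hY : Y = diskCyl.{u} n,
    f = eqToHom hX ≫ diskCylInclusion n ≫ eqToHom hY.symm

theorem IsNumericallyGenerated.nuTop_eq {A : Type u} [t : TopologicalSpace A]
    (hA : IsNumericallyGenerated A) : nuTop A = t :=
  le_antisymm (nuTop_le A) hA

theorem continuous_of_continuous_nuTop {A X : Type u} [tA : TopologicalSpace A]
    [TopologicalSpace X] {f : A → X} (hf : Continuous[tA, nuTop X] f) : Continuous f :=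
  @Continuous.comp _ _ _ _ (nuTop X) _ _ _ (continuous_id_of_le (nuTop_le X)) hf

theorem IsNumericallyGenerated.continuous_nuTop_iff {A X : Type u} [tA : TopologicalSpace A]
    [TopologicalSpace X] (hA : IsNumericallyGenerated A) {f : A → X} :
    Continuous[tA, nuTop X] f ↔ Continuous f := by
  refine ⟨continuous_of_continuous_nuTop, fun hf => ?_⟩
  have hν := continuous_nuTop_map ⟨f, hf⟩
  rwa [hA.nuTop_eq] at hν

/-- Both directions are the identity on underlying functions, so the naturality squares of the
adjunction commute by `rfl`. -/
def ngHomEquiv (A : NGCat.{u}) (X : TopCat.{u}) :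
    (ngInclusion.obj A ⟶ X) ≃ (A ⟶ nuFunctor.obj X) where
  toFun f := ⟨@TopCat.ofHom A.obj X _ (nuTop X)
    (@ContinuousMap.mk _ _ _ (nuTop X) f (A.property.continuous_nuTop_iff.2 f.hom.continuous))⟩
  invFun g := TopCat.ofHom ⟨g.hom, continuous_of_continuous_nuTop g.hom.hom.continuous⟩
  left_inv _ := rfl
  right_inv _ := rfl

/-- The functor `ν : Top → NG`, sending a space `X` to `X` retopologized
with the numerically open sets as open sets, is right adjoint to the inclusion functor
`i : NG → Top`; hence `NG` is a coreflective subcategory of `Top`. -/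
theorem nu_right_adjoint_to_inclusion :
    Nonempty (ngInclusion.{u} ⊣ nuFunctor.{u}) :=
  ⟨Adjunction.mkOfHomEquiv
    { homEquiv := ngHomEquiv
      homEquiv_naturality_left_symm _ _ := rfl
      homEquiv_naturality_right _ _ := rfl }⟩

end Paper
end
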